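/- Let I ⊆ ℝ be an interval, (X, x_0) a based metric space, Φ a symmetric norm, and S : I → S_Φ(X, x_0) a continuous map whose rank is bounded by n (i.e., rank S(t) ≤ n for all t). Then there exist n continuous maps λ_1, ..., λ_n : I → X such that S(t) = {λ_1(t), ..., λ_n(t)}* for all t ∈ I. -/

import Mathlib

/-!
Enumerations of `S(t)` by `n`-tuples (padded with the basepoint) turn `S` into a path in the
symmetric product `X^n / Sₙ`: since `Φ` dominates every entry, `d_Φ(S(t), S(t')) < ε` yields
enumerations of `S(t)` and `S(t')` that are pointwise `ε`-close, and hence a permutation matching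
the two tuples up to `2ε`. Such a path lifts to `X^n` by induction on `n`. Near a time where the
tuple is not constant its entries split into clusters around the distinct values; each cluster
moves continuously and has fewer entries, so it lifts. On an interval, local lifts glue after
reindexing by a permutation; at times where all entries coincide any ordering is continuous.
-/

open Filter

/-- A symmetric norm: a norm on the space `c_00` of finitely supported real
sequences (modelled as `ℕ →₀ ℝ`), normalised by `Φ(1,0,0,…) = 1`, and invariant
under permutations of the entries and under replacing entries by their absolute
values. -/
structure SymmetricNorm where
  toFun : (ℕ →₀ ℝ) → ℝ
  nonneg : ∀ ξ, 0 ≤ toFun ξ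
  eq_zero : ∀ ξ, toFun ξ = 0 → ξ = 0
  add_le : ∀ ξ η, toFun (ξ + η) ≤ toFun ξ + toFun η
  smul_eq : ∀ (c : ℝ) (ξ), toFun (c • ξ) = |c| * toFun ξ
  norm_single : toFun (Finsupp.single 0 1) = 1
  perm_invariant : ∀ (π : Equiv.Perm ℕ) (ξ), toFun (Finsupp.equivMapDomain π ξ) = toFun ξ
  abs_invariant : ∀ (ξ : ℕ →₀ ℝ), toFun (Finsupp.mapRange (fun a => |a|) abs_zero ξ) = toFun ξ

/-- The truncation `(ξ_0, …, ξ_{n-1}, 0, 0, …)` of a sequence, as an element of `c_00`. -/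
noncomputable def truncF (ξ : ℕ → ℝ) (n : ℕ) : ℕ →₀ ℝ :=
  ∑ i ∈ Finset.range n, Finsupp.single i (ξ i)

/-- The extension of a symmetric norm to sequences: `Φ(ξ) = lim_n Φ(ξ_0,…,ξ_{n-1},0,0,…)`. -/
noncomputable def SymmetricNorm.ext (Φ : SymmetricNorm) (ξ : ℕ → ℝ) : ℝ :=
  limUnder atTop fun n => Φ.toFun (truncF ξ n)

/-- Membership in the natural domain `ℓ_Φ`: the sequence tends to `0` and the
`Φ`-norms of its truncations converge. -/
def MemLPhi (Φ : SymmetricNorm) (ξ : ℕ → ℝ) : Prop :=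
  Tendsto ξ atTop (nhds 0) ∧ ∃ L, Tendsto (fun n => Φ.toFun (truncF ξ n)) atTop (nhds L)

/-- Membership in `ℓ_Φ^+`: nonnegative `Φ`-summable sequences. -/
def MemLPhiPlus (Φ : SymmetricNorm) (ξ : ℕ → ℝ) : Prop :=
  (∀ i, 0 ≤ ξ i) ∧ MemLPhi Φ ξ

/-- A symmetric norm is regular if `Φ(ξ_{n+1}, ξ_{n+2}, …) → 0` for every `ξ ∈ ℓ_Φ`. -/
def SymmetricNorm.Regular (Φ : SymmetricNorm) : Prop :=
  ∀ ξ : ℕ → ℝ, MemLPhi Φ ξ →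
    Tendsto (fun n => Φ.ext fun i => ξ (n + i)) atTop (nhds 0)

/-- `partialMax ξ k` is the supremum of sums of `k` distinct entries of `ξ`;
for nonnegative `ξ ∈ c_0` this equals `ξ^↓_1 + ⋯ + ξ^↓_k`. -/
noncomputable def partialMax (ξ : ℕ → ℝ) (k : ℕ) : ℝ :=
  sSup ((fun s : Finset ℕ => ∑ i ∈ s, ξ i) '' {s | s.card = k})

/-- The nonincreasing rearrangement `ξ^↓` of a (nonnegative, null) sequence,
defined via `ξ^↓_1 = max ξ_i`, `ξ^↓_1 + ξ^↓_2 = max_{i ≠ j} (ξ_i + ξ_j)`, …. -/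
noncomputable def decRearr (ξ : ℕ → ℝ) (k : ℕ) : ℝ :=
  partialMax ξ (k + 1) - partialMax ξ k
open scoped Classical

variable {X : Type*} [MetricSpace X]

/-- `s : ℕ → X` is an enumeration of the countable multiset `S` in `(X, x₀)`:
every point other than the basepoint occurs in `s` exactly according to its
multiplicity in `S`. -/
def IsEnum (x0 : X) (S : X → ℕ∞) (s : ℕ → X) : Prop :=
  ∀ x, x ≠ x0 → S x = {i : ℕ | s i = x}.encard

/-- A countable multiset in `(X, x₀)`: a multiplicity function in which the
basepoint is the only point of infinite multiplicity and whose support is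
countable. -/
def IsCMultiset (x0 : X) (S : X → ℕ∞) : Prop :=
  S x0 = ⊤ ∧ (∀ x, x ≠ x0 → S x ≠ ⊤) ∧ {x | S x ≠ 0}.Countable

/-- Membership in `S_Φ(X, x₀)`: a countable multiset whose points `s_i` satisfy
`(d(x₀, s_i))_i ∈ ℓ_Φ`. -/
def MemSPhi (Φ : SymmetricNorm) (x0 : X) (S : X → ℕ∞) : Prop :=
  IsCMultiset x0 S ∧ ∃ s : ℕ → X, IsEnum x0 S s ∧ MemLPhi Φ fun i => dist x0 (s i)

/-- The distance `d_Φ(S, T)`: the infimum over pairs of enumerations `(s_i), (t_i)`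
of `S, T` of `Φ(d(s_1,t_1), d(s_2,t_2), …)`. -/
noncomputable def dPhi (Φ : SymmetricNorm) (x0 : X) (S T : X → ℕ∞) : ℝ :=
  sInf {r | ∃ s t : ℕ → X, IsEnum x0 S s ∧ IsEnum x0 T t ∧
    MemLPhi Φ (fun i => dist (s i) (t i)) ∧ r = Φ.ext fun i => dist (s i) (t i)}

/-- The sum of two multisets (addition of multiplicities away from the basepoint). -/
noncomputable def msum (x0 : X) (S T : X → ℕ∞) : X → ℕ∞ := fun x => if x = x0 then ⊤ else S x + T x

/-- The difference of two multisets (subtraction of multiplicities away from the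
basepoint). -/
noncomputable def mdiff (x0 : X) (S T : X → ℕ∞) : X → ℕ∞ := fun x => if x = x0 then ⊤ else S x - T x

/-- The intersection of a multiset with a subset `V ⊆ X`. -/
noncomputable def minter (x0 : X) (S : X → ℕ∞) (V : Set X) : X → ℕ∞ :=
  fun x => if x = x0 then ⊤ else if x ∈ V then S x else 0

/-- The multiset `S` has rank `n`: its total multiplicity away from the basepoint
is `n`, i.e. its non-basepoint part can be listed by a tuple of length `n`. -/
def HasRank (x0 : X) (S : X → ℕ∞) (n : ℕ) : Prop :=
  ∃ f : Fin n → X, (∀ i, f i ≠ x0) ∧ ∀ x, x ≠ x0 → S x = {i : Fin n | f i = x}.encard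

open Set Topology

theorem truncF_apply (ξ : ℕ → ℝ) (m i : ℕ) : truncF ξ m i = if i < m then ξ i else 0 := by
  simp [truncF, Finsupp.finsetSum_apply, Finsupp.single_apply]

namespace SymmetricNorm

theorem apply_single (Φ : SymmetricNorm) (j : ℕ) (c : ℝ) :
    Φ.toFun (Finsupp.single j c) = |c| := by
  have h₁ : Finsupp.single j c = Finsupp.equivMapDomain (Equiv.swap 0 j) (Finsupp.single 0 c) := by
    rw [Finsupp.equivMapDomain_single, Equiv.swap_apply_left]
  have h₂ : (Finsupp.single 0 c : ℕ →₀ ℝ) = c • Finsupp.single 0 1 := by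
    rw [Finsupp.smul_single, smul_eq_mul, mul_one]
  rw [h₁, Φ.perm_invariant, h₂, Φ.smul_eq, Φ.norm_single, mul_one]

/-- Flipping the signs of all entries but the `j`-th does not change `Φ`, and the flipped
sequence `ξ'` satisfies `ξ + ξ' = 2 ξ_j e_j`. -/
theorem abs_apply_le (Φ : SymmetricNorm) (ξ : ℕ →₀ ℝ) (j : ℕ) :
    |ξ j| ≤ Φ.toFun ξ := by
  set ξ' := Finsupp.single j (2 * ξ j) - ξ
  have habs : Finsupp.mapRange (fun a => |a|) abs_zero ξ' =
      Finsupp.mapRange (fun a => |a|) abs_zero ξ := by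
    ext i
    by_cases hij : j = i
    · subst hij; simp [ξ', two_mul]
    · simp [ξ', hij]
  have hΦ' : Φ.toFun ξ' = Φ.toFun ξ := by rw [← Φ.abs_invariant ξ', habs, Φ.abs_invariant]
  calc |ξ j| = Φ.toFun (ξ + ξ') / 2 := by
        rw [show ξ + ξ' = Finsupp.single j (2 * ξ j) by simp [ξ'], Φ.apply_single, abs_mul,
          abs_two]
        ring
    _ ≤ (Φ.toFun ξ + Φ.toFun ξ') / 2 := by gcongr; exact Φ.add_le ξ ξ'
    _ = Φ.toFun ξ := by rw [hΦ']; ring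

theorem abs_le_ext (Φ : SymmetricNorm) {ξ : ℕ → ℝ} (hξ : MemLPhi Φ ξ) (j : ℕ) :
    |ξ j| ≤ Φ.ext ξ := by
  obtain ⟨L, hL⟩ := hξ.2
  rw [SymmetricNorm.ext, hL.limUnder_eq]
  refine ge_of_tendsto hL ((eventually_gt_atTop j).mono fun m hm => ?_)
  simpa [truncF_apply, hm] using Φ.abs_apply_le (truncF ξ m) j

end SymmetricNorm

theorem memLPhi_of_eventually_eq_zero (Φ : SymmetricNorm) {ξ : ℕ → ℝ}
    (h : ∀ᶠ j in atTop, ξ j = 0) : MemLPhi Φ ξ := by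
  obtain ⟨N, hN⟩ := eventually_atTop.1 h
  refine ⟨tendsto_const_nhds.congr' (h.mono fun j hj => hj.symm), Φ.toFun (truncF ξ N),
    tendsto_const_nhds.congr' ((eventually_ge_atTop N).mono fun m hm => ?_)⟩
  congr 1
  ext i
  simp only [truncF_apply]
  split_ifs <;> first | rfl | omega | exact (hN i (by omega)).symm

section Enumerations

variable {Y ι κ : Type*}

/-- `S = {f i | i : ι}*`. -/
def IsEnumeration (y₀ : Y) (S : Y → ℕ∞) (f : ι → Y) : Prop :=
  ∀ y, y ≠ y₀ → S y = {i | f i = y}.encard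

theorem IsEnumeration.extend {y₀ : Y} {S : Y → ℕ∞} {f : ι → Y} (hf : IsEnumeration y₀ S f)
    {e : ι → κ} (he : Function.Injective e) :
    IsEnumeration y₀ S (Function.extend e f fun _ => y₀) := by
  intro y hy
  rw [hf y hy, ← he.encard_image]
  congr 1
  ext j
  by_cases hj : ∃ i, e i = j
  · obtain ⟨i, rfl⟩ := hj
    simp [he.extend_apply, he.eq_iff]
  · simp only [mem_ofPred_eq, Function.extend_apply' _ _ _ hj, mem_image]
    exact ⟨fun ⟨i, _, hi⟩ => (hj ⟨i, hi⟩).elim, fun h => (hy h.symm).elim⟩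

theorem HasRank.exists_isEnumeration_fin {y₀ : Y} {S : Y → ℕ∞} {k n : ℕ} (h : HasRank y₀ S k)
    (hkn : k ≤ n) : ∃ f : Fin n → Y, IsEnumeration y₀ S f :=
  let ⟨_, _, hf⟩ := h
  ⟨_, IsEnumeration.extend hf (Fin.castLE_injective hkn)⟩

variable {x0 : X} {S T : X → ℕ∞}

theorem exists_isEnum_dist_lt_of_dPhi_lt {Φ : SymmetricNorm} {n : ℕ} {f g : Fin n → X}
    (hf : IsEnumeration x0 S f) (hg : IsEnumeration x0 T g) {ε : ℝ} (h : dPhi Φ x0 S T < ε) :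
    ∃ s t : ℕ → X, IsEnum x0 S s ∧ IsEnum x0 T t ∧ ∀ j, dist (s j) (t j) < ε := by
  have hx0 (u : Fin n → X) (j : ℕ) (hj : n ≤ j) : Function.extend Fin.val u (fun _ => x0) j = x0 :=
    Function.extend_apply' _ _ _ fun ⟨i, hi⟩ => by omega
  -- `sInf ∅ = 0`, so the infimum defining `dPhi` needs a witness: finite enumerations padded
  -- by `x0` have an eventually vanishing distance sequence.
  have hne : {r | ∃ s t : ℕ → X, IsEnum x0 S s ∧ IsEnum x0 T t ∧
      MemLPhi Φ (fun i => dist (s i) (t i)) ∧ r = Φ.ext fun i => dist (s i) (t i)}.Nonempty :=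
    ⟨_, _, _, hf.extend Fin.val_injective, hg.extend Fin.val_injective,
      memLPhi_of_eventually_eq_zero Φ ((eventually_ge_atTop n).mono fun j hj => by
        simp only [hx0 f j hj, hx0 g j hj, dist_self]), rfl⟩
  obtain ⟨r, ⟨s, t, hs, ht, hst, rfl⟩, hr⟩ := exists_lt_of_csInf_lt hne h
  exact ⟨s, t, hs, ht, fun j => ((le_abs_self _).trans (Φ.abs_le_ext hst j)).trans_lt hr⟩

theorem exists_bijOn_of_encard_fiber_eq [Nonempty κ] {y₀ : Y} {u : ι → Y} {v : κ → Y}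
    (hfin : ∀ y, y ≠ y₀ → {i | u i = y}.Finite)
    (h : ∀ y, y ≠ y₀ → {i | u i = y}.encard = {j | v j = y}.encard) :
    ∃ φ : ι → κ, BijOn φ {i | u i ≠ y₀} {j | v j ≠ y₀} ∧ ∀ i, u i ≠ y₀ → v (φ i) = u i := by
  have hfiber (x : Y) : ∃ φ : ι → κ, x ≠ y₀ → BijOn φ {i | u i = x} {j | v j = x} := by
    by_cases hx : x = y₀
    · exact ⟨fun _ => Classical.arbitrary κ, fun h => (h hx).elim⟩
    · obtain ⟨φ, hφ⟩ := (hfin x hx).exists_bijOn_of_encard_eq (h x hx)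
      exact ⟨φ, fun _ => hφ⟩
  choose φ hφ using hfiber
  have hval (i : ι) (hi : u i ≠ y₀) : v (φ (u i) i) = u i := (hφ (u i) hi).mapsTo rfl
  refine ⟨fun i => φ (u i) i, ⟨fun i hi => by simpa [hval i hi] using hi, fun i hi i' hi' he => ?_,
    fun j hj => ?_⟩, hval⟩
  · simp only at he
    have hu : u i = u i' := by simpa [hval i hi, hval i' hi'] using congrArg v he
    rw [← hu] at he
    exact (hφ (u i) hi).injOn rfl hu.symm he
  · obtain ⟨i, hi, hij⟩ := (hφ (v j) hj).surjOn (rfl : v j = v j)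
    refine ⟨i, show u i ≠ y₀ from hi ▸ hj, ?_⟩
    simp only [show u i = v j from hi, hij]

/-- Match `f` with `s` and `t` with `g` by value; an index of `f` whose partner in `t` is the
basepoint lies within `ε` of `x0`, and so does an index of `g` whose partner in `s` is. -/
theorem exists_perm_dist_lt_of_isEnum [Finite ι] {f g : ι → X} {s t : ℕ → X}
    (hf : IsEnumeration x0 S f) (hg : IsEnumeration x0 T g) (hs : IsEnum x0 S s)
    (ht : IsEnum x0 T t) {ε : ℝ} (hst : ∀ j, dist (s j) (t j) < ε) :
    ∃ σ : Equiv.Perm ι, ∀ i, dist (f i) (g (σ i)) < 2 * ε := by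
  cases isEmpty_or_nonempty ι
  · exact ⟨1, isEmptyElim⟩
  have := Fintype.ofFinite ι
  have hε : 0 < ε := dist_nonneg.trans_lt (hst 0)
  obtain ⟨φ, hφ, hφf⟩ := exists_bijOn_of_encard_fiber_eq (u := f) (v := s)
    (fun _ _ => toFinite _) fun x hx => (hf x hx).symm.trans (hs x hx)
  obtain ⟨ψ, hψ, hψt⟩ := exists_bijOn_of_encard_fiber_eq (u := t) (v := g)
    (fun x hx => encard_ne_top_iff.1 <|
      (ht x hx).symm.trans (hg x hx) ▸ (toFinite _).encard_lt_top.ne)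
    fun x hx => (ht x hx).symm.trans (hg x hx)
  set D := {i | f i ≠ x0 ∧ t (φ i) ≠ x0}
  have hinj : InjOn (ψ ∘ φ) D := fun i hi i' hi' he => hφ.injOn hi.1 hi'.1 (hψ.injOn hi.2 hi'.2 he)
  obtain ⟨e, he⟩ := MapsTo.exists_equiv_extend_of_card_eq (t := (Finset.univ : Finset ι))
    Finset.card_univ.symm (fun i _ => Finset.mem_coe.2 (Finset.mem_univ ((ψ ∘ φ) i))) hinj
  set σ := e.trans (Equiv.subtypeUnivEquiv Finset.mem_univ)
  have hσ (i : ι) (hi : i ∈ D) : σ i = ψ (φ i) := he i hi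
  have hf₀ (i : ι) (hi : i ∉ D) : dist (f i) x0 < ε := by
    by_cases hfi : f i = x0
    · rwa [hfi, dist_self]
    · have ht₀ : t (φ i) = x0 := by_contra fun h => hi ⟨hfi, h⟩
      simpa [hφf i hfi, ht₀] using hst (φ i)
  have hg₀ (i : ι) (hi : i ∉ D) : dist x0 (g (σ i)) < ε := by
    by_cases hgi : g (σ i) = x0
    · rwa [hgi, dist_self]
    obtain ⟨j, hj, hjσ⟩ := hψ.surjOn hgi
    have hs₀ : s j = x0 := by
      by_contra hsj
      obtain ⟨i', hi', rfl⟩ := hφ.surjOn hsj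
      have hi'D : i' ∈ D := ⟨hi', hj⟩
      exact hi (σ.injective ((hσ i' hi'D).trans hjσ) ▸ hi'D)
    simpa [← hjσ, hψt j hj, hs₀] using hst j
  refine ⟨σ, fun i => ?_⟩
  by_cases hi : i ∈ D
  · rw [hσ i hi, hψt _ hi.2, ← hφf i hi.1]
    linarith [hst (φ i)]
  · linarith [hf₀ i hi, hg₀ i hi, dist_triangle (f i) x0 (g (σ i))]

end Enumerations

section Lifting

variable {T ι : Type*} [TopologicalSpace T]

/-- `t ↦ {F t i}*` is continuous for the matching distance `min_σ max_i d(F t i, F t' (σ i))`,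
i.e. as a path in the symmetric product `X^ι / Perm ι`. -/
def OrbitContinuousOn (F : T → ι → X) (J : Set T) : Prop :=
  ∀ t ∈ J, ∀ ε > 0, ∀ᶠ t' in 𝓝[J] t, ∃ σ : Equiv.Perm ι, ∀ i, dist (F t i) (F t' (σ i)) < ε

def IsLiftOn (F G : T → ι → X) (J : Set T) : Prop :=
  ContinuousOn G J ∧ ∀ t ∈ J, ∃ σ : Equiv.Perm ι, G t = F t ∘ σ

variable {F G G₁ G₂ : T → ι → X} {J J' : Set T}

theorem OrbitContinuousOn.mono (hF : OrbitContinuousOn F J) (h : J' ⊆ J) :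
    OrbitContinuousOn F J' :=
  fun t ht ε hε => nhdsWithin_mono t h (hF t (h ht) ε hε)

theorem IsLiftOn.mono (hG : IsLiftOn F G J) (h : J' ⊆ J) : IsLiftOn F G J' :=
  ⟨hG.1.mono h, fun t ht => hG.2 t (h ht)⟩

theorem IsLiftOn.comp_perm (hG : IsLiftOn F G J) (π : Equiv.Perm ι) :
    IsLiftOn F (fun t => G t ∘ π) J := by
  refine ⟨continuousOn_pi.2 fun i => continuousOn_pi.1 hG.1 (π i), fun t ht => ?_⟩
  obtain ⟨σ, hσ⟩ := hG.2 t ht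
  exact ⟨π.trans σ, by simp only [hσ]; rfl⟩

theorem IsLiftOn.exists_perm_eq {t : T} (h₁ : IsLiftOn F G₁ J) (h₂ : IsLiftOn F G₂ J')
    (ht : t ∈ J) (ht' : t ∈ J') : ∃ π : Equiv.Perm ι, G₂ t ∘ π = G₁ t := by
  obtain ⟨σ₁, hσ₁⟩ := h₁.2 t ht
  obtain ⟨σ₂, hσ₂⟩ := h₂.2 t ht'
  exact ⟨σ₁.trans σ₂.symm, by ext i; simp [hσ₁, hσ₂]⟩

theorem IsLiftOn.of_forall_eqOn
    (h : ∀ t ∈ J, ∃ W ∈ 𝓝[J] t, ∃ H, IsLiftOn F H W ∧ EqOn G H W) : IsLiftOn F G J := by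
  refine ⟨fun t ht => ?_, fun t ht => ?_⟩ <;> obtain ⟨W, hW, H, hH, hGH⟩ := h t ht
  · have htW := mem_of_mem_nhdsWithin ht hW
    exact ((hH.1 t htW).mono_of_mem_nhdsWithin hW).congr_of_eventuallyEq
      (mem_of_superset hW hGH) (hGH htW)
  · rw [hGH (mem_of_mem_nhdsWithin ht hW)]
    exact hH.2 t (mem_of_mem_nhdsWithin ht hW)

theorem OrbitContinuousOn.eventually_exists_ne (hF : OrbitContinuousOn F J) {t : T} (ht : t ∈ J)
    {i j : ι} (hij : F t i ≠ F t j) : ∀ᶠ t' in 𝓝[J] t, ∃ i j, F t' i ≠ F t' j := by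
  filter_upwards [hF t ht _ (half_pos (dist_pos.2 hij))] with t' ⟨σ, hσ⟩
  refine ⟨σ i, σ j, fun h => ?_⟩
  have hj : dist (F t j) (F t' (σ i)) < dist (F t i) (F t j) / 2 := by rw [h]; exact hσ j
  linarith [hσ i, dist_triangle_right (F t i) (F t j) (F t' (σ i))]

theorem IsLiftOn.of_fibers {Y : Type*} {c : ι → Y} {σ : T → Equiv.Perm ι}
    {G : ∀ y, T → {i // c i = y} → X}
    (hG : ∀ y, IsLiftOn (fun t (a : {i // c i = y}) => F t (σ t a)) (G y) J) :
    IsLiftOn F (fun t i => G (c i) t ⟨i, rfl⟩) J := by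
  refine ⟨continuousOn_pi.2 fun i => continuousOn_pi.1 (hG (c i)).1 ⟨i, rfl⟩, fun t ht => ?_⟩
  choose ρ hρ using fun y => (hG y).2 t ht
  exact ⟨(Equiv.ofFiberEquiv ρ).trans (σ t), funext fun i => congrFun (hρ (c i)) ⟨i, rfl⟩⟩

theorem exists_pos_le_dist_of_ne [Finite ι] (c : ι → X) :
    ∃ r > 0, ∀ i j, c i ≠ c j → r ≤ dist (c i) (c j) := by
  have h (p : ι × ι) : ∀ᶠ r in 𝓝[>] (0 : ℝ), c p.1 ≠ c p.2 → r ≤ dist (c p.1) (c p.2) := by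
    by_cases hp : c p.1 = c p.2
    · exact Eventually.of_forall fun _ h => absurd hp h
    · exact (eventually_nhdsWithin_of_eventually_nhds (ge_mem_nhds (dist_pos.2 hp))).mono
        fun _ h _ => h
  obtain ⟨r, hr, hr0⟩ := ((eventually_all.2 h).and self_mem_nhdsWithin).exists
  exact ⟨r, hr0, fun i j => hr (i, j)⟩

/-- The entries of `F t` near a value `y` of `c` form a cluster, indexed through `σ t` by the
fibre of `c` over `y`, and this cluster moves continuously. -/
theorem OrbitContinuousOn.comp_fiber (hF : OrbitContinuousOn F J) {c : ι → X} {r : ℝ} (hr : 0 < r)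
    (hsep : ∀ i j, c i ≠ c j → r ≤ dist (c i) (c j)) {σ : T → Equiv.Perm ι}
    (hσ : ∀ t ∈ J, ∀ i, dist (c i) (F t (σ t i)) < r / 4) (y : X) :
    OrbitContinuousOn (fun t (a : {i // c i = y}) => F t (σ t a)) J := by
  intro t ht ε hε
  filter_upwards [hF t ht _ (lt_min hε (by positivity : 0 < r / 4)), self_mem_nhdsWithin]
    with t' ⟨τ, hτ⟩ ht'
  set π : Equiv.Perm ι := (σ t).trans (τ.trans (σ t').symm)
  have hπ (a : ι) : σ t' (π a) = τ (σ t a) := by simp [π]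
  -- `π` moves each index within its cluster, since clusters are `r` apart
  have hcπ (a : ι) : c (π a) = c a := by
    by_contra hne
    have h₁ := hσ t' ht' (π a)
    rw [hπ] at h₁
    linarith [hsep _ _ hne, hσ t ht a, hτ (σ t a), min_le_right ε (r / 4),
      dist_triangle4 (c (π a)) (F t' (τ (σ t a))) (F t (σ t a)) (c a),
      dist_comm (F t' (τ (σ t a))) (F t (σ t a)), dist_comm (F t (σ t a)) (c a)]
  refine ⟨π.subtypePerm fun a => by rw [hcπ], fun a => ?_⟩
  simpa [hπ] using (hτ (σ t a)).trans_le (min_le_left _ _)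

/-- Where all entries of `F t` coincide, every reordering of nearby tuples is close to `F t`,
so `F` itself may be used there. -/
theorem IsLiftOn.piecewise_of_const [Fintype ι] {U : Set T} [DecidablePred (· ∈ U)]
    (hG : IsLiftOn F G U) (hU : ∀ t ∈ U, U ∈ 𝓝[J] t) (hF : OrbitContinuousOn F J)
    (hconst : ∀ t ∈ J \ U, ∀ i j, F t i = F t j) : IsLiftOn F (U.piecewise G F) J := by
  have hsel : ∀ t ∈ J, ∃ σ : Equiv.Perm ι, U.piecewise G F t = F t ∘ σ := fun t _ => by
    by_cases htU : t ∈ U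
    · rw [piecewise_eq_of_mem _ _ _ htU]; exact hG.2 t htU
    · exact ⟨1, by rw [piecewise_eq_of_notMem _ _ _ htU]; rfl⟩
  refine ⟨fun t ht => ?_, hsel⟩
  by_cases htU : t ∈ U
  · refine (((hG.1 t htU).mono_of_mem_nhdsWithin (hU t htU))).congr_of_eventuallyEq ?_
      (piecewise_eq_of_mem _ _ _ htU)
    exact mem_of_superset (hU t htU) fun t' ht' => piecewise_eq_of_mem _ _ _ ht'
  · refine Metric.tendsto_nhds.2 fun ε hε => ?_
    filter_upwards [hF t ht ε hε, self_mem_nhdsWithin] with t' ⟨σ, hσ⟩ ht'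
    obtain ⟨τ, hτ⟩ := hsel t' ht'
    rw [hτ, piecewise_eq_of_notMem _ _ _ htU, dist_pi_lt_iff hε]
    intro i
    rw [dist_comm, hconst t ⟨ht, htU⟩ i (σ.symm (τ i))]
    simpa using hσ (σ.symm (τ i))

end Lifting

section RealLifting

variable {ι : Type*} {F G G₁ G₂ : ℝ → ι → X}

theorem IsLiftOn.if_le {J : Set ℝ} {c : ℝ} (h₁ : IsLiftOn F G₁ (J ∩ Iic c))
    (h₂ : IsLiftOn F G₂ (J ∩ Ici c)) (hc : G₁ c = G₂ c) :
    IsLiftOn F (fun t => if t ≤ c then G₁ t else G₂ t) J := by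
  refine ⟨ContinuousOn.if (fun t ht => ?_) ?_ ?_, fun t ht => ?_⟩
  · rw [show {t : ℝ | t ≤ c} = Iic c from rfl, frontier_Iic] at ht
    rw [ht.2]; exact hc
  · simpa [show {t : ℝ | t ≤ c} = Iic c from rfl] using h₁.1
  · simpa [show {t : ℝ | c < t} = Ioi c from rfl, closure_Ioi] using h₂.1
  · by_cases htc : t ≤ c
    · simpa [htc] using h₁.2 t ⟨ht, htc⟩
    · simpa [htc] using h₂.2 t ⟨ht, (not_le.1 htc).le⟩

theorem IsLiftOn.exists_extend_Icc {K : ℝ → ι → X} {a b a' b' : ℝ}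
    (hG : IsLiftOn F G (Icc a b)) (hK : IsLiftOn F K (Icc a' b'))
    (ha : a' ≤ a) (hab : a ≤ b) (hb : b ≤ b') :
    ∃ G', IsLiftOn F G' (Icc a' b') ∧ EqOn G' G (Icc a b) := by
  obtain ⟨π₂, hπ₂⟩ := hG.exists_perm_eq hK (right_mem_Icc.2 hab) ⟨ha.trans hab, hb⟩
  have hH : IsLiftOn F (fun t => if t ≤ b then G t else K t ∘ π₂) (Icc a b') :=
    IsLiftOn.if_le (hG.mono fun t ht => ⟨ht.1.1, ht.2⟩)
      ((hK.comp_perm π₂).mono fun t ht => ⟨ha.trans ht.1.1, ht.1.2⟩) (by simp [hπ₂])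
  obtain ⟨π₁, hπ₁⟩ := hH.exists_perm_eq hK (left_mem_Icc.2 (hab.trans hb)) ⟨ha, hab.trans hb⟩
  refine ⟨_, IsLiftOn.if_le (c := a) ((hK.comp_perm π₁).mono fun t ht => ⟨ht.1.1, ht.1.2⟩)
    (hH.mono fun t ht => ⟨ht.2, ht.1.2⟩) (by simpa using hπ₁), fun t ht => ?_⟩
  by_cases hta : t ≤ a
  · obtain rfl : t = a := le_antisymm hta ht.1
    simpa [hab] using hπ₁
  · simp [hta, ht.2]

variable {J : Set ℝ}

theorem exists_isLiftOn_Icc_of_locally (hJ : J.OrdConnected)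
    (hloc : ∀ t ∈ J, ∃ V ∈ 𝓝[J] t, ∃ G, IsLiftOn F G V) {a b : ℝ} (ha : a ∈ J) (hb : b ∈ J) :
    ∃ G, IsLiftOn F G (Icc a b) := by
  refine hJ.isPreconnected.induction₂' (fun x y => ∃ G, IsLiftOn F G (Icc x y))
    (fun x hx => ?_) (fun x y z _ hy _ ⟨G₁, h₁⟩ ⟨G₂, h₂⟩ => ?_) ha hb
  · obtain ⟨V, hV, G, hG⟩ := hloc x hx
    obtain ⟨δ, hδ, hδV⟩ := Metric.mem_nhdsWithin_iff.1 hV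
    have hW : (Metric.ball x δ ∩ J).OrdConnected := (convex_ball x δ).ordConnected.inter hJ
    filter_upwards [nhdsWithin_le_nhds (Metric.ball_mem_nhds x hδ), self_mem_nhdsWithin]
      with y hy hyJ
    have hxy := (hW.uIcc_subset ⟨Metric.mem_ball_self hδ, hx⟩ ⟨hy, hyJ⟩).trans hδV
    exact ⟨⟨G, hG.mono (Icc_subset_uIcc.trans hxy)⟩, ⟨G, hG.mono (Icc_subset_uIcc'.trans hxy)⟩⟩
  · rcases lt_or_ge y x with hyx | hxy
    · exact ⟨G₂, h₂.mono (Icc_subset_Icc_left hyx.le)⟩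
    rcases lt_or_ge z y with hzy | hyz
    · exact ⟨G₁, h₁.mono (Icc_subset_Icc_right hzy.le)⟩
    obtain ⟨π, hπ⟩ := h₁.exists_perm_eq h₂ (right_mem_Icc.2 hxy) (left_mem_Icc.2 hyz)
    exact ⟨_, IsLiftOn.if_le (c := y) (h₁.mono fun t ht => ⟨ht.1.1, ht.2⟩)
      ((h₂.comp_perm π).mono fun t ht => ⟨ht.2, ht.1.2⟩) hπ.symm⟩

theorem eventually_Iic_mem_nhdsWithin {α β : Type*} [LinearOrder α] [TopologicalSpace α]
    [OrderTopology α] {s : Set α} {l : Filter β} {b : β → α} (hb : ∀ x ∈ s, ∀ᶠ k in l, x ≤ b k)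
    {t : α} (ht : t ∈ s) : ∀ᶠ k in l, Iic (b k) ∈ 𝓝[s] t := by
  by_cases h : ∃ x ∈ s, t < x
  · obtain ⟨x, hx, htx⟩ := h
    filter_upwards [hb x hx] with k hk
    exact mem_nhdsWithin_of_mem_nhds (mem_of_superset (Iio_mem_nhds htx) fun y hy => hy.le.trans hk)
  · push Not at h
    filter_upwards [hb t ht] with k hk
    exact mem_of_superset self_mem_nhdsWithin fun y hy => (h y hy).trans hk

theorem Set.OrdConnected.exists_Icc_exhaustion (hJ : J.OrdConnected) {t₀ : ℝ} (ht₀ : t₀ ∈ J) :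
    ∃ a b : ℕ → ℝ, Antitone a ∧ Monotone b ∧ (∀ k, a k ∈ J ∧ b k ∈ J ∧ a k ≤ b k) ∧
      ∀ t ∈ J, ∀ᶠ k in atTop, Icc (a k) (b k) ∈ 𝓝[J] t := by
  have : Nonempty J := ⟨⟨t₀, ht₀⟩⟩
  obtain ⟨u, hu_mono, hu⟩ := exists_seq_monotone_tendsto_atTop_atTop J
  obtain ⟨v, hv_anti, hv⟩ := exists_seq_antitone_tendsto_atTop_atBot J
  refine ⟨fun k => min (v k) t₀, fun k => max (u k) t₀,
    fun i j hij => min_le_min (hv_anti hij) le_rfl, fun i j hij => max_le_max (hu_mono hij) le_rfl,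
    fun k => ⟨min_rec' (· ∈ J) (v k).2 ht₀, max_rec' (· ∈ J) (u k).2 ht₀,
      (min_le_right _ _).trans (le_max_right _ _)⟩, fun t ht => ?_⟩
  have hb : ∀ x ∈ J, ∀ᶠ k in atTop, x ≤ max (u k : ℝ) t₀ := fun x hx =>
    (tendsto_atTop.1 hu ⟨x, hx⟩).mono fun k hk => le_max_of_le_left hk
  have ha : ∀ x ∈ J, ∀ᶠ k in atTop, min (v k : ℝ) t₀ ≤ x := fun x hx =>
    (tendsto_atBot.1 hv ⟨x, hx⟩).mono fun k hk => min_le_of_left_le hk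
  filter_upwards [eventually_Iic_mem_nhdsWithin hb ht,
    eventually_Iic_mem_nhdsWithin (α := ℝᵒᵈ) ha ht] with k hbk hak
  rw [← Ici_inter_Iic]
  exact inter_mem hak hbk

/-- Lifts on an exhaustion of `J` by compact intervals are extended one from the next; their
limit agrees near each point with one of them. -/
theorem exists_isLiftOn_of_locally (hJ : J.OrdConnected)
    (hloc : ∀ t ∈ J, ∃ V ∈ 𝓝[J] t, ∃ G, IsLiftOn F G V) : ∃ G, IsLiftOn F G J := by
  rcases J.eq_empty_or_nonempty with rfl | ⟨t₀, ht₀⟩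
  · exact ⟨F, continuousOn_empty F, fun t ht => ht.elim⟩
  obtain ⟨a, b, ha, hb, hab, hexh⟩ := hJ.exists_Icc_exhaustion ht₀
  choose K hK using fun k => exists_isLiftOn_Icc_of_locally hJ hloc (hab k).1 (hab k).2.1
  have hext (k : ℕ) (G : ℝ → ι → X) (hG : IsLiftOn F G (Icc (a k) (b k))) :
      ∃ G', IsLiftOn F G' (Icc (a (k + 1)) (b (k + 1))) ∧ EqOn G' G (Icc (a k) (b k)) :=
    hG.exists_extend_Icc (hK (k + 1)) (ha k.le_succ) (hab k).2.2 (hb k.le_succ)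
  choose! ext hext₁ hext₂ using hext
  let L : ℕ → ℝ → ι → X := fun k => Nat.rec (K 0) (fun k G => ext k G) k
  have hL (k : ℕ) : IsLiftOn F (L k) (Icc (a k) (b k)) := by
    induction k with
    | zero => exact hK 0
    | succ k ih => exact hext₁ k _ ih
  have hLL {k m : ℕ} (hkm : k ≤ m) : EqOn (L m) (L k) (Icc (a k) (b k)) := by
    induction m, hkm using Nat.le_induction with
    | base => exact fun _ _ => rfl
    | succ m hkm ih => exact fun t ht =>
        (hext₂ m _ (hL m) (Icc_subset_Icc (ha hkm) (hb hkm) ht)).trans (ih ht)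
  choose! N hN using fun t (ht : t ∈ J) => (hexh t ht).exists
  refine ⟨fun t => L (N t) t, IsLiftOn.of_forall_eqOn fun t ht =>
    ⟨_, hN t ht, L (N t), hL (N t), fun s hs => ?_⟩⟩
  have hsJ : s ∈ J := hJ.out (hab _).1 (hab _).2.1 hs
  have hs' := mem_of_mem_nhdsWithin hsJ (hN s hsJ)
  rcases le_total (N s) (N t) with h | h
  exacts [(hLL h hs').symm, hLL h hs]

theorem exists_isLiftOn_of_locally_of_relOpen {U : Set ℝ} (hJ : J.OrdConnected) (hUJ : U ⊆ J)
    (hU : ∀ t ∈ U, U ∈ 𝓝[J] t) (hloc : ∀ t ∈ U, ∃ V ∈ 𝓝[U] t, ∃ G, IsLiftOn F G V) :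
    ∃ G, IsLiftOn F G U := by
  have hC (t : ℝ) (ht : t ∈ U) : ordConnectedComponent U t ∈ 𝓝[U] t := by
    obtain ⟨δ, hδ, hδU⟩ := Metric.mem_nhdsWithin_iff.1 (hU t ht)
    have hW : (Metric.ball t δ ∩ J).OrdConnected := (convex_ball t δ).ordConnected.inter hJ
    refine mem_of_superset (inter_mem_nhdsWithin U (Metric.ball_mem_nhds t hδ)) fun s hs => ?_
    exact subset_ordConnectedComponent (h := hW) ⟨Metric.mem_ball_self hδ, hUJ ht⟩ hδU
      ⟨hs.2, hUJ hs.1⟩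
  have hlift (t : ℝ) : ∃ G, IsLiftOn F G (ordConnectedComponent U t) := by
    refine exists_isLiftOn_of_locally inferInstance fun s hs => ?_
    obtain ⟨V, hV, hG⟩ := hloc s (ordConnectedComponent_subset hs)
    exact ⟨V, nhdsWithin_mono s ordConnectedComponent_subset hV, hG⟩
  have hchoice (C : Set ℝ) : ∃ G, (∃ G', IsLiftOn F G' C) → IsLiftOn F G C := by
    by_cases h : ∃ G', IsLiftOn F G' C
    exacts [⟨_, fun _ => h.choose_spec⟩, ⟨F, fun h' => (h h').elim⟩]
  choose GC hGC using hchoice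
  refine ⟨fun t => GC (ordConnectedComponent U t) t, IsLiftOn.of_forall_eqOn fun t ht =>
    ⟨_, hC t ht, _, hGC _ (hlift t), fun s hs => ?_⟩⟩
  dsimp only
  rw [ordConnectedComponent_eq (x := s) (y := t)
    (by rw [uIcc_comm]; exact mem_ordConnectedComponent.1 hs)]

theorem OrbitContinuousOn.exists_local_isLiftOn [Finite ι] (hJ : J.OrdConnected)
    (hF : OrbitContinuousOn F J) {t₁ : ℝ} (ht₁ : t₁ ∈ J)
    (IH : ∀ (y : X) (F' : ℝ → {i // F t₁ i = y} → X) (V : Set ℝ), V.OrdConnected →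
      OrbitContinuousOn F' V → ∃ G, IsLiftOn F' G V) :
    ∃ V ∈ 𝓝[J] t₁, ∃ G, IsLiftOn F G V := by
  obtain ⟨r, hr, hsep⟩ := exists_pos_le_dist_of_ne (F t₁)
  obtain ⟨δ, hδ, hδV⟩ := Metric.mem_nhdsWithin_iff.1 (hF t₁ ht₁ (r / 4) (by positivity))
  have hV : (J ∩ Metric.ball t₁ δ).OrdConnected := hJ.inter (convex_ball t₁ δ).ordConnected
  have hclose (t : ℝ) (ht : t ∈ J ∩ Metric.ball t₁ δ) :
      ∃ σ : Equiv.Perm ι, ∀ i, dist (F t₁ i) (F t (σ i)) < r / 4 := hδV ⟨ht.2, ht.1⟩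
  choose! σ hσ using hclose
  choose G hG using fun y => IH y _ _ hV ((hF.mono inter_subset_left).comp_fiber hr hsep hσ y)
  exact ⟨_, inter_mem_nhdsWithin J (Metric.ball_mem_nhds t₁ hδ), _, IsLiftOn.of_fibers hG⟩

theorem OrbitContinuousOn.exists_isLiftOn [Finite ι] (hJ : J.OrdConnected)
    (hF : OrbitContinuousOn F J) : ∃ G, IsLiftOn F G J := by
  induction h : Nat.card ι using Nat.strong_induction_on generalizing ι J with
  | _ m IH =>
  have := Fintype.ofFinite ι
  -- off the collision set `J \ U`, the clusters of `F` have fewer entries and lift by induction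
  set U := {t ∈ J | ∃ i j, F t i ≠ F t j}
  have hU (t : ℝ) (ht : t ∈ U) : U ∈ 𝓝[J] t := by
    obtain ⟨ht, i, j, hij⟩ := ht
    filter_upwards [hF.eventually_exists_ne ht hij, self_mem_nhdsWithin] with t' h ht'
    exact ⟨ht', h⟩
  have hloc (t : ℝ) (ht : t ∈ U) : ∃ V ∈ 𝓝[U] t, ∃ G, IsLiftOn F G V := by
    obtain ⟨ht, i, j, hij⟩ := ht
    obtain ⟨V, hV, hG⟩ := hF.exists_local_isLiftOn hJ ht fun y F' V hV hF' => by
      have hy : ∃ k, F t k ≠ y := by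
        by_cases hi : F t i = y
        exacts [⟨j, fun hj => hij (hi.trans hj.symm)⟩, ⟨i, hi⟩]
      exact IH _ (h ▸ Finite.card_subtype_lt hy.choose_spec) hV hF' rfl
    exact ⟨V, nhdsWithin_mono t (sep_subset _ _) hV, hG⟩
  obtain ⟨G, hG⟩ := exists_isLiftOn_of_locally_of_relOpen hJ (sep_subset _ _) hU hloc
  refine ⟨_, hG.piecewise_of_const hU hF fun t ht i j => ?_⟩
  by_contra hij
  exact ht.2 ⟨ht.1, i, j, hij⟩

end RealLifting

theorem finiteRank_continuous_enumeration_general (x0 : X) (Φ : SymmetricNorm)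
    (I : Set ℝ) (hI : I.OrdConnected) (S : I → X → ℕ∞)
    (n : ℕ)
    (hrank : ∀ t, ∃ k ≤ n, HasRank x0 (S t) k)
    (hcont : ∀ t : I, ∀ ε > 0, ∃ δ > 0, ∀ t' : I,
      |(t' : ℝ) - (t : ℝ)| < δ → dPhi Φ x0 (S t) (S t') < ε) :
    ∃ lam : Fin n → I → X, (∀ i, Continuous (lam i)) ∧
      ∀ t : I, ∀ x, x ≠ x0 → S t x = {i : Fin n | lam i t = x}.encard := by
  choose f hf using fun t => (hrank t).elim fun k ⟨hkn, hk⟩ => hk.exists_isEnumeration_fin hkn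
  let F : ℝ → Fin n → X := fun r => if h : r ∈ I then f ⟨r, h⟩ else fun _ => x0
  have hF : OrbitContinuousOn F I := by
    intro t ht ε hε
    obtain ⟨δ, hδ, hδS⟩ := hcont ⟨t, ht⟩ (ε / 2) (half_pos hε)
    filter_upwards [nhdsWithin_le_nhds (Metric.ball_mem_nhds t hδ), self_mem_nhdsWithin]
      with t' ht'δ ht'
    obtain ⟨s, u, hs, hu, hsu⟩ :=
      exists_isEnum_dist_lt_of_dPhi_lt (hf _) (hf _) (hδS ⟨t', ht'⟩ ht'δ)
    obtain ⟨σ, hσ⟩ := exists_perm_dist_lt_of_isEnum (hf _) (hf _) hs hu hsu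
    exact ⟨σ, fun i => by simpa [F, ht, ht', mul_div_cancel₀] using hσ i⟩
  obtain ⟨G, hGc, hGσ⟩ := hF.exists_isLiftOn hI
  refine ⟨fun i t => G t i, fun i => (continuous_apply i).comp hGc.domRestrict, fun t x hx => ?_⟩
  obtain ⟨σ, hσ⟩ := hGσ t t.2
  rw [hf t x hx, ← encard_preimage_of_bijective σ.bijective]
  simp [hσ, F]

/-- Finite-rank continuous enumeration: if `I ⊆ ℝ` is an interval and
`S : I → S_Φ(X, x₀)` is a continuous map of rank bounded by `n`, then there are
`n` continuous maps `λ_1, …, λ_n : I → X` with `S(t) = {λ_1(t), …, λ_n(t)}*`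
for all `t ∈ I`. -/
theorem finiteRank_continuous_enumeration (x0 : X) (Φ : SymmetricNorm)
    (I : Set ℝ) (hI : I.OrdConnected) (S : I → X → ℕ∞)
    (hS : ∀ t, MemSPhi Φ x0 (S t)) (n : ℕ)
    (hrank : ∀ t, ∃ k ≤ n, HasRank x0 (S t) k)
    (hcont : ∀ t : I, ∀ ε > 0, ∃ δ > 0, ∀ t' : I,
      |(t' : ℝ) - (t : ℝ)| < δ → dPhi Φ x0 (S t) (S t') < ε) :
    ∃ lam : Fin n → I → X, (∀ i, Continuous (lam i)) ∧
      ∀ t : I, ∀ x, x ≠ x0 → S t x = {i : Fin n | lam i t = x}.encard :=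
  finiteRank_continuous_enumeration_general x0 Φ I hI S n hrank hcont
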